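/- Let 𝒳 and 𝒴 be finite alphabets and let δ > 0. For every η > 0 there exists ε₀ > 0 such that for all 0 < ε < ε₀ and every joint pmf P_{X,Y} on 𝒳×𝒴 whose marginals satisfy P_X(x) ≥ δ and P_Y(y) ≥ δ for all x,y, and which satisfies Σ_{x,y} (P_{X,Y}(x,y) − P_X(x)P_Y(y))²/(P_X(x)P_Y(y)) ≤ ε², the mutual information I(X;Y) := Σ_{x,y} P_{X,Y}(x,y)·log(P_{X,Y}(x,y)/(P_X(x)P_Y(y))) satisfies |I(X;Y) − (1/2)·‖B̃‖_F²| ≤ η·ε², where (1/2)·‖B̃‖_F² = (1/2)·Σ_i σ_i(B̃)² = (1/2)·Σ_{x,y}(P_{X,Y}(x,y) − P_X(x)P_Y(y))²/(P_X(x)P_Y(y)). -/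

import Mathlib

/-!
Write `Q = P_X P_Y`. Since `P` and `Q` both have total mass one, the first-order terms of the
Taylor expansion `p log (p / q) = (p - q) + (p - q)² / (2q) + O(|p - q|³ / q²)` cancel in the
sum, so `I(X;Y) - ½ χ²(P ‖ Q)` is a sum of cubic remainders. Each term of the χ²-sum is at most
`ε²`, and `Q ≥ δ²`, so `|P - Q| ≤ (ε / δ) Q` pointwise: every cubic remainder is at most
`4ε/δ` times the corresponding χ²-term, and the total error is at most `(4ε/δ) ε²`.
-/

open Finset Real

lemma abs_one_add_mul_log_one_add_sub_le {t : ℝ} (ht : |t| ≤ 1 / 2) :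
    |(1 + t) * log (1 + t) - t - t ^ 2 / 2| ≤ 4 * |t| ^ 3 := by
  have ht0 := abs_nonneg t
  set r := log (1 + t) - t + t ^ 2 / 2
  have hr : |r| ≤ 2 * |t| ^ 3 := by
    have h := abs_log_sub_add_sum_range_le (x := -t) (by rw [abs_neg]; linarith) 2
    simp only [sum_range_succ, sum_range_zero, abs_neg, sub_neg_eq_add] at h
    calc |r| = _ := by congr 1; push_cast; ring
      _ ≤ |t| ^ 3 / (1 - |t|) := h
      _ ≤ 2 * |t| ^ 3 := by
        rw [div_le_iff₀ (by linarith)]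
        nlinarith [pow_nonneg ht0 3]
  have h1t : |1 + t| ≤ 3 / 2 := by
    rw [abs_le] at ht ⊢
    constructor <;> linarith
  calc |(1 + t) * log (1 + t) - t - t ^ 2 / 2| = |(1 + t) * r - t ^ 3 / 2| := by
        congr 1; simp only [r]; ring
    _ ≤ |1 + t| * |r| + |t| ^ 3 / 2 := by
      refine (abs_sub _ _).trans_eq ?_
      rw [abs_mul, abs_div, abs_pow, abs_two]
    _ ≤ 3 / 2 * (2 * |t| ^ 3) + |t| ^ 3 / 2 := by gcongr
    _ ≤ 4 * |t| ^ 3 := by linarith [pow_nonneg ht0 3]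

lemma abs_mul_log_div_sub_le {p q c : ℝ} (hq : 0 < q) (hc : c ≤ 1 / 2)
    (hpq : |p - q| ≤ c * q) :
    |p * log (p / q) - (p - q) - (p - q) ^ 2 / (2 * q)| ≤ 4 * c * ((p - q) ^ 2 / q) := by
  set t := (p - q) / q
  have htc : |t| ≤ c := by rwa [abs_div, abs_of_pos hq, div_le_iff₀ hq]
  have hp : p = q * (1 + t) := by simp only [t]; field_simp; ring
  have hexpand : p * log (p / q) - (p - q) - (p - q) ^ 2 / (2 * q) =
      q * ((1 + t) * log (1 + t) - t - t ^ 2 / 2) := by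
    rw [hp, mul_div_cancel_left₀ _ hq.ne']; field_simp; ring
  have hchi : (p - q) ^ 2 / q = q * t ^ 2 := by simp only [t]; field_simp
  rw [hexpand, hchi, abs_mul, abs_of_pos hq]
  calc q * |(1 + t) * log (1 + t) - t - t ^ 2 / 2| ≤ q * (4 * |t| ^ 3) :=
        mul_le_mul_of_nonneg_left (abs_one_add_mul_log_one_add_sub_le (htc.trans hc)) hq.le
    _ = 4 * |t| * (q * t ^ 2) := by rw [← sq_abs t]; ring
    _ ≤ 4 * c * (q * t ^ 2) := by gcongr

lemma abs_sub_le_of_sq_div_le {p q m ε : ℝ} (hm : 0 < m) (hmq : m ^ 2 ≤ q) (hε : 0 ≤ ε)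
    (h : (p - q) ^ 2 / q ≤ ε ^ 2) : |p - q| ≤ ε / m * q := by
  have hq : 0 < q := (pow_pos hm 2).trans_le hmq
  refine abs_le_of_sq_le_sq ?_ (by positivity)
  rw [div_le_iff₀ hq] at h
  calc (p - q) ^ 2 ≤ ε ^ 2 * q := h
    _ ≤ ε ^ 2 * q * (q / m ^ 2) := by
      refine le_mul_of_one_le_right (by positivity) ?_
      rwa [one_le_div (by positivity)]
    _ = (ε / m * q) ^ 2 := by field_simp

theorem abs_sum_mul_log_div_sub_half_chiSq_le {ι : Type*} [Fintype ι] {p q : ι → ℝ} {c : ℝ}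
    (hq : ∀ i, 0 < q i) (hc : c ≤ 1 / 2) (hpq : ∀ i, |p i - q i| ≤ c * q i)
    (hsum : ∑ i, p i = ∑ i, q i) :
    |∑ i, p i * log (p i / q i) - 1 / 2 * ∑ i, (p i - q i) ^ 2 / q i| ≤
      4 * c * ∑ i, (p i - q i) ^ 2 / q i := by
  have hremainder : ∑ i, p i * log (p i / q i) - 1 / 2 * ∑ i, (p i - q i) ^ 2 / q i =
      ∑ i, (p i * log (p i / q i) - (p i - q i) - (p i - q i) ^ 2 / (2 * q i)) := by
    have hlin : ∑ i, (p i - q i) = 0 := by rw [sum_sub_distrib, hsum, sub_self]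
    rw [sum_sub_distrib, sum_sub_distrib, hlin, sub_zero, mul_sum]
    exact congrArg _ (sum_congr rfl fun i _ => by ring)
  rw [hremainder, mul_sum]
  exact (abs_sum_le_sum_abs _ _).trans <| sum_le_sum fun i _ =>
    abs_mul_log_div_sub_le (hq i) hc (hpq i)

theorem abs_sum_mul_log_div_sub_half_chiSq_le_of_chiSq_le {ι : Type*} [Fintype ι]
    {p q : ι → ℝ} {m ε : ℝ} (hm : 0 < m) (hmq : ∀ i, m ^ 2 ≤ q i) (hε : 0 ≤ ε)
    (hεm : ε ≤ m / 2) (hsum : ∑ i, p i = ∑ i, q i)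
    (hchi : ∑ i, (p i - q i) ^ 2 / q i ≤ ε ^ 2) :
    |∑ i, p i * log (p i / q i) - 1 / 2 * ∑ i, (p i - q i) ^ 2 / q i| ≤ 4 * ε / m * ε ^ 2 := by
  have hq i : 0 < q i := (pow_pos hm 2).trans_le (hmq i)
  have hterm i : (p i - q i) ^ 2 / q i ≤ ε ^ 2 :=
    (single_le_sum (f := fun j => (p j - q j) ^ 2 / q j) (fun j _ => div_nonneg (sq_nonneg _) (hq j).le) (mem_univ i)).trans hchi
  have hc : ε / m ≤ 1 / 2 := by rw [div_le_iff₀ hm]; linarith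
  calc _ ≤ 4 * (ε / m) * ∑ i, (p i - q i) ^ 2 / q i :=
        abs_sum_mul_log_div_sub_half_chiSq_le hq hc
          (fun i => abs_sub_le_of_sq_div_le hm (hmq i) hε (hterm i)) hsum
    _ ≤ 4 * (ε / m) * ε ^ 2 := by gcongr
    _ = 4 * ε / m * ε ^ 2 := by ring

theorem stmt_8 {X Y : Type*} [Fintype X] [Fintype Y] (δ : ℝ) (hδ : 0 < δ) :
    ∀ η > 0, ∃ ε₀ > 0, ∀ ε : ℝ, 0 < ε → ε < ε₀ →
      ∀ P : X → Y → ℝ,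
        (∀ x y, 0 ≤ P x y) → (∑ x, ∑ y, P x y = 1) →
        (∀ x, δ ≤ ∑ y, P x y) → (∀ y, δ ≤ ∑ x, P x y) →
        (∑ x, ∑ y, (P x y - (∑ y', P x y') * (∑ x', P x' y)) ^ 2 /
            ((∑ y', P x y') * (∑ x', P x' y)) ≤ ε ^ 2) →
        |(∑ x, ∑ y, P x y * Real.log (P x y / ((∑ y', P x y') * (∑ x', P x' y)))) -
            (1 / 2) * ∑ x, ∑ y, (P x y - (∑ y', P x y') * (∑ x', P x' y)) ^ 2 /
              ((∑ y', P x y') * (∑ x', P x' y))| ≤ η * ε ^ 2 := by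
  intro η hη
  refine ⟨min (δ / 2) (η * δ / 4), by positivity, fun ε hε hεlt P _ hsum hPX hPY hchi => ?_⟩
  have hεδ : ε ≤ δ / 2 := (hεlt.trans_le (min_le_left _ _)).le
  have hεη : 4 * ε / δ ≤ η := by
    rw [div_le_iff₀ hδ]; linarith [hεlt.trans_le (min_le_right _ _)]
  have hQ x y : δ ^ 2 ≤ (∑ y', P x y') * (∑ x', P x' y) := by
    rw [sq]; exact mul_le_mul (hPX x) (hPY y) hδ.le (hδ.le.trans (hPX x))
  have hQsum : ∑ x, ∑ y, (∑ y', P x y') * (∑ x', P x' y) = ∑ x, ∑ y, P x y := by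
    have hsum' : ∑ y, ∑ x, P x y = 1 := by rw [sum_comm]; exact hsum
    rw [← sum_mul_sum, hsum, hsum', one_mul]
  have key := abs_sum_mul_log_div_sub_half_chiSq_le_of_chiSq_le
    (p := fun i : X × Y => P i.1 i.2)
    (q := fun i => (∑ y', P i.1 y') * (∑ x', P x' i.2)) hδ (fun i => hQ i.1 i.2) hε.le hεδ
    (by simpa only [Fintype.sum_prod_type] using hQsum.symm)
    (by simpa only [Fintype.sum_prod_type] using hchi)
  simp only [Fintype.sum_prod_type] at key
  exact key.trans (by gcongr)
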